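/- For every p > 1/2 there exist b₀ ∈ ℕ, β₀ < ∞, and c > 0 such that for every integer b ≥ b₀, every β ≥ β₀, with external field h = 0, and every integer ℓ ≥ 1: P(R^ℓ(ω) > e^{−2β}) ≤ e^{−c b}, where the environment ω is random with ω_r = +1 fixed and {ω_x}_{x ≠ r} i.i.d. with P(ω_x = +1) = p. -/

import Mathlib

/-!
Peierls argument. If the root is minus, flip its minus cluster `C` (a subtree of
`T_ℓ ∩ T(ω)` containing the root) to plus. For a fixed `C` this map is injective and raises the
energy by `2β e_C(ω)`, where `e_C(ω)` is the sum of the spins of `ω` at the children of `C`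
lying outside `C`: those inside the region are plus, like `ω` there, and the others carry the
boundary condition. Hence `R^ℓ(ω) ≤ ∑_C e^{-2β e_C(ω)}`, the sum running over all subtrees
of `T_ℓ` containing the root.

If `S(ω) = ∑_C e^{2β₀ (1 - e_C(ω))} ≤ 1`, every `e_C(ω)` is at least `1` and so
`R^ℓ(ω) ≤ e^{-2β} S(ω) ≤ e^{-2β}` for all `β ≥ β₀`. By Markov's inequality
`P(S > 1) ≤ E S = e^{2β₀} ∑_C q^{|∂C|}` with `q = E e^{-2β₀ ω_x} < 1` for a suitable `β₀`,
because `p > 1/2`. Since `|∂C| = (b - 1)|C| + 1`, and decomposing a subtree into its `b`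
branches gives `∑_C w^{|C|} ≤ 2w` as soon as `(1 + 2w)^b ≤ 2`, the expectation is at most
`2 e^{2β₀} q^b`, which is exponentially small in `b`.
-/

open scoped BigOperators ENNReal
open MeasureTheory

namespace Paper

/-- Vertices of the rooted `b`-ary tree: finite words over an alphabet of size `b`. -/
abbrev V (b : ℕ) : Type := List (Fin b)

/-- The finset of vertices at depth exactly `n`. -/
def wordsOfLen (b : ℕ) : ℕ → Finset (V b)
  | 0 => {([] : V b)}
  | n + 1 => (wordsOfLen b n).biUnion fun x => Finset.univ.image fun k : Fin b => x ++ [k]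

/-- The finset `T_ℓ` of vertices at depth at most `ℓ`. -/
def ball (b ℓ : ℕ) : Finset (V b) := (Finset.range (ℓ + 1)).biUnion (wordsOfLen b)

/-- `x` belongs to `T(ω)`, the connected component of the root inside the set of free
vertices (`ω = true` means free): every vertex on the path from the root to `x` is free. -/
def inT (b : ℕ) (ω : V b → Bool) (x : V b) : Bool :=
  (List.range (x.length + 1)).all fun k => ω (x.take k)

/-- Neighbours of a vertex: its `b` children and (if it is not the root) its parent. -/
def nbrs (b : ℕ) (x : V b) : Finset (V b) :=
  (Finset.univ.image fun k : Fin b => x ++ [k]) ∪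
    (if x = ([] : V b) then ∅ else {x.dropLast})

/-- The (outer) boundary `∂A` of a set of vertices. -/
def bdry (b : ℕ) (A : Finset (V b)) : Finset (V b) := (A.biUnion (nbrs b)) \ A

/-- Spin value of a Boolean: `true ↦ +1`, `false ↦ -1`. -/
noncomputable def spin (s : Bool) : ℝ := if s then 1 else -1

/-- Ising energy (with a `+` sign, i.e. `β(Σ_{xy ∈ E(A∪∂A)} σ_x σ_y + h Σ_{x∈A} σ_x)`)
of the configuration `c` in the region `A`; the edges of `A ∪ ∂A` are enumerated as pairs
(parent y, y) with both endpoints in `A ∪ ∂A`; the edge from `cut` to its parent is removed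
(taking `cut = []` removes nothing). -/
noncomputable def energy (b : ℕ) (β h : ℝ) (A : Finset (V b)) (cut : V b)
    (c : V b → Bool) : ℝ :=
  β * ((∑ y ∈ (A ∪ bdry b A).filter
        (fun y => y ≠ ([] : V b) ∧ y ≠ cut ∧ y.dropLast ∈ A ∪ bdry b A),
          spin (c y.dropLast) * spin (c y))
      + h * ∑ x ∈ A, spin (c x))

/-- Configuration on all of `𝕋^b` equal to `σ` on `A` and to the boundary condition `ω`
off `A`. -/
def glue (b : ℕ) (A : Finset (V b)) (ω : V b → Bool) (σ : {x // x ∈ A} → Bool) :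
    V b → Bool :=
  fun x => if hx : x ∈ A then σ ⟨x, hx⟩ else ω x

/-- Expectation of the observable `g` under the Ising Gibbs measure on `A` with parameters
`(β, h)`, boundary condition `ω`, and the edge from `cut` to its parent removed. -/
noncomputable def gibbsExp (b : ℕ) (β h : ℝ) (A : Finset (V b)) (cut : V b)
    (ω : V b → Bool) (g : (V b → Bool) → ℝ) : ℝ :=
  (∑ σ : {x // x ∈ A} → Bool,
      Real.exp (energy b β h A cut (glue b A ω σ)) * g (glue b A ω σ)) /
  (∑ σ : {x // x ∈ A} → Bool, Real.exp (energy b β h A cut (glue b A ω σ)))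

/-- The region `T_ℓ ∩ T(ω)`. -/
def region (b ℓ : ℕ) (ω : V b → Bool) : Finset (V b) :=
  (ball b ℓ).filter fun x => inT b ω x = true

/-- The ratio `R^ℓ(ω) = μ⁺_{ℓ,ω}(σ_r = -1) / μ⁺_{ℓ,ω}(σ_r = +1)`, with value `⊤`
when the root is an obstacle. -/
noncomputable def RfinE (b : ℕ) (β h : ℝ) (ℓ : ℕ) (ω : V b → Bool) : ℝ≥0∞ :=
  if ω ([] : V b) = true then
    ENNReal.ofReal
      ((gibbsExp b β h (region b ℓ ω) [] ω fun c => if c ([] : V b) = false then 1 else 0) /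
       (gibbsExp b β h (region b ℓ ω) [] ω fun c => if c ([] : V b) = true then 1 else 0))
  else ⊤

/-- `P` is the law of i.i.d. Bernoulli(`p`) spins (`+1`, i.e. `true`, with probability `p`)
on the vertices of `𝕋^b`. -/
def IsBernoulliProduct (b : ℕ) (p : ℝ) (P : Measure (V b → Bool)) : Prop :=
  IsProbabilityMeasure P ∧
    ∀ (F : Finset (V b)) (g : V b → Bool),
      P {ω | ∀ x ∈ F, ω x = g x} =
        ∏ x ∈ F, ENNReal.ofReal (if g x then p else 1 - p)

/-- `P` is the law of the random environment whose root spin is `+1` (free) almost surely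
and whose other spins are i.i.d. Bernoulli(`p`). -/
def IsBernoulliProductRoot (b : ℕ) (p : ℝ) (P : Measure (V b → Bool)) : Prop :=
  IsProbabilityMeasure P ∧
    ∀ (F : Finset (V b)) (g : V b → Bool), ([] : V b) ∉ F →
      P {ω | ω ([] : V b) = true ∧ ∀ x ∈ F, ω x = g x} =
        ∏ x ∈ F, ENNReal.ofReal (if g x then p else 1 - p)

end Paper

namespace Finset

variable {α : Type*} [DecidableEq α]

theorem sum_powerset_prod_decide_mem {R : Type*} [CommSemiring R] (F : Finset α)
    (h : α → Bool → R) :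
    ∑ U ∈ F.powerset, ∏ x ∈ F, h x (decide (x ∈ U)) = ∏ x ∈ F, (h x true + h x false) := by
  rw [prod_add]
  refine sum_congr rfl fun U hU => ?_
  rw [← prod_sdiff (mem_powerset.1 hU), mul_comm]
  congr 1 <;> refine prod_congr rfl fun x hx => ?_
  · simp [hx]
  · simp [(mem_sdiff.1 hx).2]

/-- Reading `U` as the set of `x ∈ F` with `ω_x = true`, the left side is the expectation of
`∏_{x ∈ B} φ(ω_x)` for independent spins with `P(ω_x = true) = p`. -/
theorem sum_powerset_bernoulli_mul_prod {R : Type*} [CommRing R] {F B : Finset α} (hB : B ⊆ F)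
    (p : R) (φ : Bool → R) :
    ∑ U ∈ F.powerset, (∏ x ∈ F, if x ∈ U then p else 1 - p) * ∏ x ∈ B, φ (decide (x ∈ U)) =
      (p * φ true + (1 - p) * φ false) ^ #B := by
  have hsplit : ∀ U : Finset α,
      (∏ x ∈ F, if x ∈ U then p else 1 - p) * ∏ x ∈ B, φ (decide (x ∈ U)) =
        ∏ x ∈ F, (if decide (x ∈ U) then p else 1 - p) *
          if x ∈ B then φ (decide (x ∈ U)) else 1 := by
    intro U
    rw [prod_mul_distrib, prod_ite_mem, inter_eq_right.2 hB]
    simp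
  have hq : ∏ x ∈ F, (if x ∈ B then p * φ true + (1 - p) * φ false else 1) =
      (p * φ true + (1 - p) * φ false) ^ #B := by
    rw [prod_ite_mem, inter_eq_right.2 hB, prod_const]
  rw [sum_congr rfl fun U _ => hsplit U,
    sum_powerset_prod_decide_mem F fun x s => (if s then p else 1 - p) * if x ∈ B then φ s else 1,
    ← hq]
  refine prod_congr rfl fun x _ => ?_
  by_cases hx : x ∈ B <;> simp [hx]

theorem sum_filter_lt_le_div {ι : Type*} (s : Finset ι) {w f : ι → ℝ} (hw : ∀ i ∈ s, 0 ≤ w i)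
    (hf : ∀ i ∈ s, 0 ≤ f i) {t : ℝ} (ht : 0 < t) :
    ∑ i ∈ s with t < f i, w i ≤ (∑ i ∈ s, w i * f i) / t := by
  rw [le_div_iff₀ ht, sum_mul]
  calc ∑ i ∈ s with t < f i, w i * t
      ≤ ∑ i ∈ s with t < f i, w i * f i := sum_le_sum fun i hi =>
        mul_le_mul_of_nonneg_left (mem_filter.1 hi).2.le (hw i (filter_subset _ _ hi))
    _ ≤ ∑ i ∈ s, w i * f i := sum_le_sum_of_subset_of_nonneg (filter_subset _ _)
        fun i hi _ => mul_nonneg (hw i hi) (hf i hi)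

end Finset

namespace Paper

open Finset

variable {b : ℕ}

theorem mem_wordsOfLen {n : ℕ} {x : V b} : x ∈ wordsOfLen b n ↔ x.length = n := by
  induction n generalizing x with
  | zero => simp [wordsOfLen, List.length_eq_zero_iff]
  | succ n ih =>
    simp only [wordsOfLen, mem_biUnion, mem_image, mem_univ, true_and]
    constructor
    · rintro ⟨y, hy, k, rfl⟩
      simp [ih.1 hy]
    · intro hx
      have hne : x ≠ [] := by rintro rfl; simp at hx
      exact ⟨x.dropLast, ih.2 (by simp [hx]), x.getLast hne, List.dropLast_append_getLast hne⟩

theorem mem_ball {ℓ : ℕ} {x : V b} : x ∈ ball b ℓ ↔ x.length ≤ ℓ := by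
  simp only [ball, mem_biUnion, mem_range, mem_wordsOfLen]
  exact ⟨fun ⟨k, hk, hx⟩ => by omega, fun h => ⟨x.length, by omega, rfl⟩⟩

theorem inT_eq_true_iff {ω : V b → Bool} {x : V b} :
    inT b ω x = true ↔ ∀ k, ω (x.take k) = true := by
  simp only [inT, List.all_eq_true, List.mem_range]
  refine ⟨fun h k => ?_, fun h k _ => h k⟩
  rcases lt_or_ge k (x.length + 1) with hk | hk
  · exact h k hk
  · simpa [List.take_of_length_le (by omega : x.length ≤ k)] using h x.length (by omega)

theorem mem_region {ℓ : ℕ} {ω : V b → Bool} {x : V b} :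
    x ∈ region b ℓ ω ↔ x.length ≤ ℓ ∧ ∀ k, ω (x.take k) = true := by
  rw [region, mem_filter, mem_ball, inT_eq_true_iff]

theorem take_mem_region {ℓ : ℕ} {ω : V b → Bool} {x : V b} (hx : x ∈ region b ℓ ω) (k : ℕ) :
    x.take k ∈ region b ℓ ω := by
  rw [mem_region] at hx ⊢
  exact ⟨(List.length_take_le' k x).trans hx.1, fun j => List.take_take ▸ hx.2 _⟩

theorem eq_true_of_mem_region {ℓ : ℕ} {ω : V b → Bool} {x : V b} (hx : x ∈ region b ℓ ω) :
    ω x = true := by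
  simpa using (mem_region.1 hx).2 x.length

theorem root_mem_region {ℓ : ℕ} {ω : V b → Bool} (hroot : ω [] = true) :
    [] ∈ region b ℓ ω :=
  mem_region.2 ⟨by simp, by simpa⟩

def children (x : V b) : Finset (V b) := univ.image fun k : Fin b => x ++ [k]

theorem mem_children {x z : V b} : z ∈ children x ↔ z ≠ [] ∧ z.dropLast = x := by
  simp only [children, mem_image, mem_univ, true_and]
  constructor
  · rintro ⟨k, rfl⟩
    simp
  · rintro ⟨hz, rfl⟩
    exact ⟨z.getLast hz, List.dropLast_append_getLast hz⟩

theorem card_children (x : V b) : #(children x) = b := by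
  rw [children, card_image_of_injective _ fun k k' h => by simpa using h, card_univ,
    Fintype.card_fin]

def outerChildren (C : Finset (V b)) : Finset (V b) := C.biUnion children \ C

theorem mem_outerChildren {C : Finset (V b)} {z : V b} :
    z ∈ outerChildren C ↔ z ≠ [] ∧ z.dropLast ∈ C ∧ z ∉ C := by
  simp only [outerChildren, mem_sdiff, mem_biUnion, mem_children]
  constructor
  · rintro ⟨⟨x, hx, hz, rfl⟩, hzC⟩
    exact ⟨hz, hx, hzC⟩
  · rintro ⟨hz, hx, hzC⟩
    exact ⟨⟨_, hx, hz, rfl⟩, hzC⟩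

theorem take_mem_of_dropLast_mem {C : Finset (V b)} (hC : ∀ x ∈ C, x.dropLast ∈ C)
    {x : V b} (hx : x ∈ C) (k : ℕ) : x.take k ∈ C := by
  induction x using List.reverseRecOn generalizing k with
  | nil => simpa using hx
  | append_singleton y a ih =>
    rcases le_or_gt k y.length with hk | hk
    · rw [List.take_append_of_le_length hk]
      exact ih (by simpa using hC _ hx) k
    · rwa [List.take_of_length_le (by rw [List.length_append, List.length_singleton]; omega)]

theorem card_outerChildren_add_card {C : Finset (V b)} (hroot : [] ∈ C)
    (hC : ∀ x ∈ C, x.dropLast ∈ C) : #(outerChildren C) + #C = b * #C + 1 := by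
  have hdisj : (C : Set (V b)).PairwiseDisjoint children := by
    intro x _ y _ hxy
    refine disjoint_left.2 fun z hzx hzy => hxy ?_
    rw [← (mem_children.1 hzx).2, ← (mem_children.1 hzy).2]
  have hinter : C.biUnion children ∩ C = C.erase [] := by
    ext z
    simp only [mem_inter, mem_biUnion, mem_children, mem_erase]
    exact ⟨fun ⟨⟨_, _, hz, _⟩, hzC⟩ => ⟨hz, hzC⟩, fun ⟨hz, hzC⟩ => ⟨⟨_, hC z hzC, hz, rfl⟩, hzC⟩⟩
  have h := card_sdiff_add_card_inter (C.biUnion children) C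
  rw [hinter, card_biUnion hdisj, card_erase_of_mem hroot] at h
  simp only [card_children, sum_const, smul_eq_mul] at h
  have hpos : 0 < #C := card_pos.2 ⟨_, hroot⟩
  rw [outerChildren, mul_comm]
  omega

theorem outerChildren_subset {ℓ : ℕ} {C : Finset (V b)} (hC : C ⊆ ball b ℓ) :
    outerChildren C ⊆ (ball b (ℓ + 1)).erase [] := by
  intro z hz
  obtain ⟨hne, hd, -⟩ := mem_outerChildren.1 hz
  have := mem_ball.1 (hC hd)
  rw [List.length_dropLast] at this
  rw [mem_erase, mem_ball]
  exact ⟨hne, by omega⟩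

def rootedSubtrees (b ℓ : ℕ) : Finset (Finset (V b)) :=
  (ball b ℓ).powerset.filter fun C => [] ∈ C ∧ ∀ x ∈ C, x.dropLast ∈ C

theorem mem_rootedSubtrees {ℓ : ℕ} {C : Finset (V b)} :
    C ∈ rootedSubtrees b ℓ ↔ C ⊆ ball b ℓ ∧ [] ∈ C ∧ ∀ x ∈ C, x.dropLast ∈ C := by
  rw [rootedSubtrees, mem_filter, mem_powerset]

theorem rootedSubtrees_zero : rootedSubtrees b 0 = {{[]}} := by
  have hball : ball b 0 = {[]} := by ext x; simp [mem_ball]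
  ext C
  rw [mem_rootedSubtrees, hball, mem_singleton]
  constructor
  · rintro ⟨hsub, hroot, -⟩
    exact (subset_singleton_iff.1 hsub).resolve_left (ne_empty_of_mem hroot)
  · rintro rfl
    simp

noncomputable def branch (C : Finset (V b)) (j : Fin b) : Finset (V b) :=
  C.preimage (List.cons j) List.cons_injective.injOn

theorem eq_insert_biUnion_branch {C : Finset (V b)} (hroot : [] ∈ C) :
    C = insert [] (univ.biUnion fun j => (branch C j).map ⟨List.cons j, List.cons_injective⟩) := by
  ext x
  cases x with
  | nil => simpa using hroot
  | cons j t => simp [branch]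

theorem card_eq_one_add_sum_card_branch {C : Finset (V b)} (hroot : [] ∈ C) :
    #C = 1 + ∑ j, #(branch C j) := by
  conv_lhs => rw [eq_insert_biUnion_branch hroot]
  rw [card_insert_of_notMem (by simp), card_biUnion]
  · simp [add_comm]
  · intro j _ j' _ hjj'
    simp only [Function.onFun, disjoint_left, mem_map, Function.Embedding.coeFn_mk]
    rintro _ ⟨t, -, rfl⟩ ⟨t', -, h⟩
    exact hjj' (List.cons_eq_cons.1 h).1.symm

theorem branch_mem {ℓ : ℕ} {C : Finset (V b)} (hC : C ∈ rootedSubtrees b (ℓ + 1)) (j : Fin b) :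
    branch C j ∈ insert ∅ (rootedSubtrees b ℓ) := by
  obtain ⟨hsub, -, hclosed⟩ := mem_rootedSubtrees.1 hC
  have hclosed' : ∀ t ∈ branch C j, t.dropLast ∈ branch C j := by
    intro t ht
    rw [branch, mem_preimage] at ht ⊢
    cases t with
    | nil => exact ht
    | cons s t => simpa [List.dropLast_cons_cons] using hclosed _ ht
  rcases (branch C j).eq_empty_or_nonempty with h | ⟨t, ht⟩
  · exact h ▸ mem_insert_self _ _
  refine mem_insert_of_mem (mem_rootedSubtrees.2 ⟨fun t ht => ?_, ?_, hclosed'⟩)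
  · have := mem_ball.1 (hsub (mem_preimage.1 ht))
    rw [List.length_cons] at this
    rw [mem_ball]
    omega
  · simpa using take_mem_of_dropLast_mem hclosed' ht 0

/-- A rooted subtree of depth `ℓ + 1` is the root together with `b` branches, each empty or a
rooted subtree of depth `ℓ`. -/
theorem sum_rootedSubtrees_pow_card_le {w : ℝ} (hw : 0 ≤ w) (hb : (1 + 2 * w) ^ b ≤ 2) :
    ∀ ℓ, ∑ C ∈ rootedSubtrees b ℓ, w ^ #C ≤ 2 * w
  | 0 => by simp [rootedSubtrees_zero]; linarith
  | ℓ + 1 => by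
    have hroot : ∀ C ∈ rootedSubtrees b (ℓ + 1), [] ∈ C := fun C hC =>
      (mem_rootedSubtrees.1 hC).2.1
    have hinj : Set.InjOn branch (rootedSubtrees b (ℓ + 1) : Set (Finset (V b))) :=
      fun C hC C' hC' h => by
        rw [eq_insert_biUnion_branch (hroot C hC), eq_insert_biUnion_branch (hroot C' hC'), h]
    have hempty : (∅ : Finset (V b)) ∉ rootedSubtrees b ℓ := fun h =>
      notMem_empty _ (mem_rootedSubtrees.1 h).2.1
    calc ∑ C ∈ rootedSubtrees b (ℓ + 1), w ^ #C
        = ∑ f ∈ (rootedSubtrees b (ℓ + 1)).image branch, w * ∏ j, w ^ #(f j) := by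
          rw [sum_image hinj]
          refine sum_congr rfl fun C hC => ?_
          rw [prod_pow_eq_pow_sum, card_eq_one_add_sum_card_branch (hroot C hC), pow_add, pow_one]
      _ ≤ ∑ f ∈ Fintype.piFinset fun _ => insert ∅ (rootedSubtrees b ℓ),
            w * ∏ j, w ^ #(f j) := by
          refine sum_le_sum_of_subset_of_nonneg ?_ fun f _ _ => by positivity
          rintro _ hf
          obtain ⟨C, hC, rfl⟩ := mem_image.1 hf
          exact Fintype.mem_piFinset.2 (branch_mem hC)
      _ = w * (1 + ∑ C ∈ rootedSubtrees b ℓ, w ^ #C) ^ b := by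
          rw [← mul_sum, ← prod_univ_sum (fun _ => insert ∅ (rootedSubtrees b ℓ)) fun _ D => w ^ #D,
            prod_const, card_univ, Fintype.card_fin,
            sum_insert hempty, card_empty, pow_zero]
      _ ≤ w * (1 + 2 * w) ^ b := by
          gcongr
          exact sum_rootedSubtrees_pow_card_le hw hb ℓ
      _ ≤ 2 * w := by nlinarith

noncomputable def boundarySpin (C : Finset (V b)) (ω : V b → Bool) : ℝ :=
  ∑ z ∈ outerChildren C, spin (ω z)

/-- Edges inside `C` keep their product, since both ends flip; only the edges leaving `C`
change. -/
theorem energy_flip {β : ℝ} {A C : Finset (V b)} {c : V b → Bool}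
    (hC : ∀ x ∈ C, x.dropLast ∈ C) (hCA : C ⊆ A) (hc : ∀ x ∈ C, c x = false) :
    energy b β 0 A [] (fun v => if v ∈ C then true else c v) =
      energy b β 0 A [] c + 2 * β * boundarySpin C c := by
  set E := (A ∪ bdry b A).filter fun y => y ≠ [] ∧ y ≠ [] ∧ y.dropLast ∈ A ∪ bdry b A
  have houter : outerChildren C ⊆ E := by
    intro z hz
    obtain ⟨hne, hd, -⟩ := mem_outerChildren.1 hz
    have hzA : z ∈ A ∪ bdry b A := by
      by_cases h : z ∈ A
      · exact mem_union_left _ h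
      · refine mem_union_right _ (mem_sdiff.2 ⟨mem_biUnion.2 ⟨_, hCA hd, ?_⟩, h⟩)
        exact mem_union_left _ (mem_children.2 ⟨hne, rfl⟩)
    exact mem_filter.2 ⟨hzA, hne, hne, mem_union_left _ (hCA hd)⟩
  have hedge : ∀ y ∈ E, spin (if y.dropLast ∈ C then true else c y.dropLast) *
      spin (if y ∈ C then true else c y) =
        spin (c y.dropLast) * spin (c y) + if y ∈ outerChildren C then 2 * spin (c y) else 0 := by
    intro y hy
    have hy0 : y ≠ [] := (mem_filter.1 hy).2.1
    by_cases hyC : y ∈ C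
    · have hyout : y ∉ outerChildren C := fun h => (mem_outerChildren.1 h).2.2 hyC
      simp [hyC, hC y hyC, hyout, hc y hyC, hc _ (hC y hyC), spin]
    · by_cases hpC : y.dropLast ∈ C
      · have hyout : y ∈ outerChildren C := mem_outerChildren.2 ⟨hy0, hpC, hyC⟩
        cases c y <;> norm_num [hyC, hpC, hyout, hc _ hpC, spin]
      · have hyout : y ∉ outerChildren C := fun h => hpC (mem_outerChildren.1 h).2.1
        simp [hyC, hpC, hyout]
  simp only [energy, zero_mul, add_zero]
  rw [sum_congr rfl hedge, sum_add_distrib, sum_ite_mem, inter_eq_right.2 houter, ← mul_sum,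
    boundarySpin]
  ring

def minusCluster (A : Finset (V b)) (c : V b → Bool) : Finset (V b) :=
  A.filter fun x => inT b (fun v => !c v) x

theorem mem_minusCluster {A : Finset (V b)} {c : V b → Bool} {x : V b} :
    x ∈ minusCluster A c ↔ x ∈ A ∧ ∀ k, c (x.take k) = false := by
  simp [minusCluster, inT_eq_true_iff]

theorem minusCluster_subset {A : Finset (V b)} {c : V b → Bool} : minusCluster A c ⊆ A :=
  filter_subset _ _

theorem eq_false_of_mem_minusCluster {A : Finset (V b)} {c : V b → Bool} {x : V b}
    (hx : x ∈ minusCluster A c) : c x = false := by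
  simpa using (mem_minusCluster.1 hx).2 x.length

theorem minusCluster_mem_rootedSubtrees {ℓ : ℕ} {ω c : V b → Bool} (hroot : ω [] = true)
    (hc : c [] = false) : minusCluster (region b ℓ ω) c ∈ rootedSubtrees b ℓ := by
  refine mem_rootedSubtrees.2 ⟨fun x hx => ?_, ?_, fun x hx => ?_⟩
  · exact filter_subset _ _ (minusCluster_subset hx)
  · exact mem_minusCluster.2 ⟨root_mem_region hroot, by simpa⟩
  · obtain ⟨hxA, hx⟩ := mem_minusCluster.1 hx
    rw [List.dropLast_eq_take]
    refine mem_minusCluster.2 ⟨take_mem_region hxA _, fun k => ?_⟩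
    rw [List.take_take]
    exact hx _

/-- Inside the region these spins are plus, since otherwise the cluster would be larger, and so
is `ω` there. -/
theorem glue_eq_of_mem_outerChildren {ℓ : ℕ} {ω : V b → Bool}
    {σ : {x // x ∈ region b ℓ ω} → Bool} {z : V b}
    (hz : z ∈ outerChildren (minusCluster (region b ℓ ω) (glue b (region b ℓ ω) ω σ))) :
    glue b (region b ℓ ω) ω σ z = ω z := by
  obtain ⟨hne, hd, hzC⟩ := mem_outerChildren.1 hz
  by_cases hzA : z ∈ region b ℓ ω
  · rw [eq_true_of_mem_region hzA]
    by_contra h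
    refine hzC (mem_minusCluster.2 ⟨hzA, fun k => ?_⟩)
    rcases lt_or_ge k z.length with hk | hk
    · have := (mem_minusCluster.1 hd).2 k
      rwa [List.dropLast_eq_take, List.take_take, min_eq_left (by omega)] at this
    · simpa [List.take_of_length_le hk] using h
  · exact dif_neg hzA

/-- The partition function of `μ⁺_{ℓ,ω}` at `h = 0`, restricted to root spin `s`. -/
noncomputable def rootPartition (b : ℕ) (β : ℝ) (ℓ : ℕ) (ω : V b → Bool) (s : Bool) : ℝ :=
  ∑ σ : {x // x ∈ region b ℓ ω} → Bool with glue b (region b ℓ ω) ω σ [] = s,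
    Real.exp (energy b β 0 (region b ℓ ω) [] (glue b (region b ℓ ω) ω σ))

section Peierls

variable {β : ℝ} {ℓ : ℕ} {ω : V b → Bool}

theorem RfinE_eq (hroot : ω [] = true) :
    RfinE b β 0 ℓ ω =
      ENNReal.ofReal (rootPartition b β ℓ ω false / rootPartition b β ℓ ω true) := by
  have hZ : (∑ σ : {x // x ∈ region b ℓ ω} → Bool,
      Real.exp (energy b β 0 (region b ℓ ω) [] (glue b (region b ℓ ω) ω σ))) ≠ 0 :=
    (sum_pos (fun _ _ => Real.exp_pos _) univ_nonempty).ne'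
  simp only [RfinE, if_pos hroot, gibbsExp, div_div_div_cancel_right₀ hZ, rootPartition,
    sum_filter, mul_ite, mul_one, mul_zero]

theorem rootPartition_true_pos (hroot : ω [] = true) : 0 < rootPartition b β ℓ ω true := by
  refine sum_pos (fun _ _ => Real.exp_pos _) ⟨fun _ => true, mem_filter.2 ⟨mem_univ _, ?_⟩⟩
  exact dif_pos (root_mem_region hroot)

theorem glue_flip {A C : Finset (V b)} (hCA : C ⊆ A) (σ : {x // x ∈ A} → Bool) :
    glue b A ω (fun x => if (x : V b) ∈ C then true else σ x) =
      fun v => if v ∈ C then true else glue b A ω σ v := by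
  funext v
  by_cases hv : v ∈ A
  · simp [glue, hv]
  · have hvC : v ∉ C := fun h => hv (hCA h)
    simp [glue, hv, hvC]

theorem injOn_flip {A C : Finset (V b)} :
    Set.InjOn (fun (σ : {x // x ∈ A} → Bool) (x : {x // x ∈ A}) =>
        if (x : V b) ∈ C then true else σ x)
      {σ | ∀ x : {x // x ∈ A}, (x : V b) ∈ C → σ x = false} := by
  intro σ hσ σ' hσ' h
  funext x
  by_cases hx : (x : V b) ∈ C
  · rw [hσ x hx, hσ' x hx]
  · simpa [hx] using congrFun h x

/-- Peierls argument: flipping the minus cluster `C` of the root to plus is injective on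
configurations with cluster `C` and raises the energy by `2β · boundarySpin C ω`. -/
theorem rootPartition_false_le (hroot : ω [] = true) :
    rootPartition b β ℓ ω false ≤
      (∑ C ∈ rootedSubtrees b ℓ, Real.exp (-(2 * β) * boundarySpin C ω)) *
        rootPartition b β ℓ ω true := by
  set A := region b ℓ ω
  set E : ({x // x ∈ A} → Bool) → ℝ := fun σ => energy b β 0 A [] (glue b A ω σ)
  have hmaps : ∀ σ ∈ univ.filter fun σ => glue b A ω σ [] = false,
      minusCluster A (glue b A ω σ) ∈ rootedSubtrees b ℓ := fun σ hσ =>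
    minusCluster_mem_rootedSubtrees hroot (mem_filter.1 hσ).2
  rw [rootPartition, ← sum_fiberwise_of_maps_to hmaps, sum_mul]
  refine sum_le_sum fun C hC => ?_
  set fiber := (univ.filter fun σ => glue b A ω σ [] = false).filter
    fun σ => minusCluster A (glue b A ω σ) = C
  set flipC : ({x // x ∈ A} → Bool) → {x // x ∈ A} → Bool :=
    fun σ x => if (x : V b) ∈ C then true else σ x
  have hclosed := (mem_rootedSubtrees.1 hC).2.2
  have hfalse : ∀ σ ∈ fiber, ∀ x ∈ C, glue b A ω σ x = false := by
    intro σ hσ x hx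
    rw [← (mem_filter.1 hσ).2] at hx
    exact eq_false_of_mem_minusCluster hx
  have hE : ∀ σ ∈ fiber, Real.exp (E σ) =
      Real.exp (-(2 * β) * boundarySpin C ω) * Real.exp (E (flipC σ)) := by
    intro σ hσ
    have hσC := (mem_filter.1 hσ).2
    have hCA : C ⊆ A := hσC ▸ minusCluster_subset
    have hbdry : boundarySpin C (glue b A ω σ) = boundarySpin C ω :=
      sum_congr rfl fun z hz => by rw [glue_eq_of_mem_outerChildren (hσC ▸ hz)]
    simp only [E, flipC]
    rw [glue_flip hCA, energy_flip hclosed hCA (hfalse σ hσ), hbdry, ← Real.exp_add]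
    ring_nf
  have hinj : Set.InjOn flipC fiber := by
    refine injOn_flip.mono ?_
    intro σ hσ x hx
    simpa [glue] using hfalse σ hσ x hx
  have himage : fiber.image flipC ⊆ univ.filter fun σ => glue b A ω σ [] = true := by
    intro τ hτ
    obtain ⟨σ, -, rfl⟩ := mem_image.1 hτ
    exact mem_filter.2 ⟨mem_univ _, by simp [flipC, glue, hroot,
      (mem_rootedSubtrees.1 hC).2.1]⟩
  calc ∑ σ ∈ fiber, Real.exp (E σ)
      = Real.exp (-(2 * β) * boundarySpin C ω) * ∑ τ ∈ fiber.image flipC, Real.exp (E τ) := by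
        rw [sum_congr rfl hE, ← mul_sum, sum_image hinj]
    _ ≤ Real.exp (-(2 * β) * boundarySpin C ω) * rootPartition b β ℓ ω true := by
        gcongr
        exact sum_le_sum_of_subset_of_nonneg himage fun _ _ _ => (Real.exp_pos _).le

end Peierls

noncomputable def peierlsSum (b : ℕ) (β₀ : ℝ) (ℓ : ℕ) (ω : V b → Bool) : ℝ :=
  ∑ C ∈ rootedSubtrees b ℓ, Real.exp (2 * β₀ * (1 - boundarySpin C ω))

section PeierlsSum

variable {β₀ : ℝ} {ℓ : ℕ} {ω : V b → Bool}

theorem peierlsSum_nonneg : 0 ≤ peierlsSum b β₀ ℓ ω :=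
  sum_nonneg fun _ _ => (Real.exp_pos _).le

theorem peierlsSum_congr {ω' : V b → Bool} (h : ∀ x ∈ (ball b (ℓ + 1)).erase [], ω x = ω' x) :
    peierlsSum b β₀ ℓ ω = peierlsSum b β₀ ℓ ω' := by
  refine sum_congr rfl fun C hC => ?_
  have hsub := outerChildren_subset (mem_rootedSubtrees.1 hC).1
  rw [boundarySpin, boundarySpin, sum_congr rfl fun z hz => by rw [h z (hsub hz)]]

/-- Each term of `peierlsSum` is at most `1`, which forces `boundarySpin C ω ≥ 1`. -/
theorem sum_exp_boundarySpin_le {β : ℝ} (hβ₀ : 0 < β₀) (hβ : β₀ ≤ β)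
    (hS : peierlsSum b β₀ ℓ ω ≤ 1) :
    ∑ C ∈ rootedSubtrees b ℓ, Real.exp (-(2 * β) * boundarySpin C ω) ≤
      Real.exp (-(2 * β)) := by
  have hterm : ∀ C ∈ rootedSubtrees b ℓ, Real.exp (-(2 * β) * boundarySpin C ω) ≤
      Real.exp (-(2 * β)) * Real.exp (2 * β₀ * (1 - boundarySpin C ω)) := by
    intro C hC
    have hle : Real.exp (2 * β₀ * (1 - boundarySpin C ω)) ≤ 1 :=
      (single_le_sum (f := fun C => Real.exp (2 * β₀ * (1 - boundarySpin C ω)))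
        (fun _ _ => (Real.exp_pos _).le) hC).trans hS
    have hspin : 1 ≤ boundarySpin C ω := by
      rw [Real.exp_le_one_iff] at hle
      nlinarith
    rw [← Real.exp_add, Real.exp_le_exp]
    nlinarith
  calc ∑ C ∈ rootedSubtrees b ℓ, Real.exp (-(2 * β) * boundarySpin C ω)
      ≤ Real.exp (-(2 * β)) * peierlsSum b β₀ ℓ ω := by
        rw [peierlsSum, mul_sum]
        exact sum_le_sum hterm
    _ ≤ Real.exp (-(2 * β)) := mul_le_of_le_one_right (Real.exp_pos _).le hS

theorem RfinE_le_of_peierlsSum_le_one {β : ℝ} (hβ₀ : 0 < β₀) (hβ : β₀ ≤ β)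
    (hroot : ω [] = true) (hS : peierlsSum b β₀ ℓ ω ≤ 1) :
    RfinE b β 0 ℓ ω ≤ ENNReal.ofReal (Real.exp (-(2 * β))) := by
  have hpos := rootPartition_true_pos (β := β) (ℓ := ℓ) hroot
  rw [RfinE_eq hroot]
  refine ENNReal.ofReal_le_ofReal ((div_le_iff₀ hpos).2 ?_)
  exact (rootPartition_false_le hroot).trans
    (mul_le_mul_of_nonneg_right (sum_exp_boundarySpin_le hβ₀ hβ hS) hpos.le)

end PeierlsSum

noncomputable def mgfSpin (p t : ℝ) : ℝ := p * Real.exp t + (1 - p) * Real.exp (-t)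

theorem sum_bernoulli_mul_peierlsSum (p β₀ : ℝ) (ℓ : ℕ) :
    ∑ U ∈ ((ball b (ℓ + 1)).erase []).powerset,
        (∏ x ∈ (ball b (ℓ + 1)).erase [], if x ∈ U then p else 1 - p) *
          peierlsSum b β₀ ℓ (fun x => decide (x ∈ U)) =
      Real.exp (2 * β₀) *
        ∑ C ∈ rootedSubtrees b ℓ, mgfSpin p (-(2 * β₀)) ^ #(outerChildren C) := by
  have hterm : ∀ (C : Finset (V b)) (ω : V b → Bool),
      Real.exp (2 * β₀ * (1 - boundarySpin C ω)) =
        Real.exp (2 * β₀) * ∏ z ∈ outerChildren C, Real.exp (-(2 * β₀) * spin (ω z)) := by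
    intro C ω
    rw [← Real.exp_sum, ← Real.exp_add, boundarySpin, ← mul_sum]
    ring_nf
  simp_rw [peierlsSum, hterm, mul_sum]
  rw [sum_comm]
  refine sum_congr rfl fun C hC => ?_
  simp_rw [mul_left_comm _ (Real.exp (2 * β₀)), ← mul_sum]
  rw [sum_powerset_bernoulli_mul_prod (outerChildren_subset (mem_rootedSubtrees.1 hC).1) p
    fun s => Real.exp (-(2 * β₀) * spin s)]
  simp [mgfSpin, spin]

namespace IsBernoulliProductRoot

variable {p : ℝ} {P : Measure (V b → Bool)}

theorem le_one (hP : IsBernoulliProductRoot b p P) (hb : 0 < b) : p ≤ 1 := by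
  have := hP.1
  have hsingle := hP.2 {[⟨0, hb⟩]} (fun _ => true) (by simp)
  simp only [prod_singleton, if_true] at hsingle
  exact (ENNReal.ofReal_le_one).1 (hsingle ▸ prob_le_one)

theorem measure_root_eq_false (hP : IsBernoulliProductRoot b p P) :
    P {ω | ω [] = false} = 0 := by
  have := hP.1
  have hmeas : MeasurableSet ((fun ω : V b → Bool => ω []) ⁻¹' {true}) :=
    measurable_pi_apply _ (measurableSet_singleton true)
  have hone : P {ω | ω [] = true} = 1 := by simpa using hP.2 ∅ (fun _ => true) (by simp)
  show P ((fun ω : V b → Bool => ω []) ⁻¹' {false}) = 0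
  simpa [← Set.preimage_compl] using (prob_compl_eq_zero_iff hmeas).2 hone

theorem measure_cylinder (hP : IsBernoulliProductRoot b p P) (hp0 : 0 ≤ p) (hp1 : p ≤ 1)
    {F : Finset (V b)} (hF : [] ∉ F) (U : Finset (V b)) :
    P {ω | ω [] = true ∧ ∀ x ∈ F, ω x = decide (x ∈ U)} =
      ENNReal.ofReal (∏ x ∈ F, if x ∈ U then p else 1 - p) := by
  rw [hP.2 F _ hF, ENNReal.ofReal_prod_of_nonneg fun x _ => by split_ifs <;> linarith]
  simp

/-- Markov's inequality for a nonnegative `f` depending only on the spins in `F`, with the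
expectation written as a finite sum. -/
theorem measure_lt_le (hP : IsBernoulliProductRoot b p P) (hp0 : 0 ≤ p) (hp1 : p ≤ 1)
    {F : Finset (V b)} (hF : [] ∉ F) {f : (V b → Bool) → ℝ} (hf : ∀ ω, 0 ≤ f ω)
    (hloc : ∀ ω ω', (∀ x ∈ F, ω x = ω' x) → f ω = f ω') {t : ℝ} (ht : 0 < t) :
    P {ω | ω [] = true → t < f ω} ≤
      ENNReal.ofReal ((∑ U ∈ F.powerset,
        (∏ x ∈ F, if x ∈ U then p else 1 - p) * f (fun x => decide (x ∈ U))) / t) := by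
  set G := F.powerset.filter fun U => t < f fun x => decide (x ∈ U)
  set cyl : Finset (V b) → Set (V b → Bool) :=
    fun U => {ω | ω [] = true ∧ ∀ x ∈ F, ω x = decide (x ∈ U)}
  have hcover : {ω | ω [] = true → t < f ω} ⊆ {ω | ω [] = false} ∪ ⋃ U ∈ G, cyl U := by
    intro ω hω
    cases hroot : ω [] with
    | false => exact Or.inl hroot
    | true =>
      have hagree : ∀ x ∈ F, ω x = decide (x ∈ F.filter fun x => ω x = true) := by
        intro x hx
        simp [hx]
      refine Or.inr (Set.mem_biUnion (x := F.filter fun x => ω x = true) ?_ ⟨hroot, hagree⟩)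
      exact mem_filter.2 ⟨mem_powerset.2 (filter_subset _ _), hloc _ _ hagree ▸ hω hroot⟩
  have hweight : ∀ U : Finset (V b), 0 ≤ ∏ x ∈ F, if x ∈ U then p else 1 - p := fun U =>
    prod_nonneg fun x _ => by split_ifs <;> linarith
  calc P {ω | ω [] = true → t < f ω}
      ≤ P {ω | ω [] = false} + P (⋃ U ∈ G, cyl U) :=
        (measure_mono hcover).trans (measure_union_le _ _)
    _ ≤ ∑ U ∈ G, P (cyl U) := by
        rw [hP.measure_root_eq_false, zero_add]
        exact measure_biUnion_finset_le _ _
    _ = ENNReal.ofReal (∑ U ∈ G, ∏ x ∈ F, if x ∈ U then p else 1 - p) := by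
        rw [ENNReal.ofReal_sum_of_nonneg fun U _ => hweight U]
        exact sum_congr rfl fun U _ => hP.measure_cylinder hp0 hp1 hF U
    _ ≤ _ := ENNReal.ofReal_le_ofReal
        (sum_filter_lt_le_div _ (fun U _ => hweight U) (fun _ _ => hf _) ht)

end IsBernoulliProductRoot

theorem sum_rootedSubtrees_pow_card_outerChildren_le {q : ℝ} (hq : 0 ≤ q) (hb : 1 ≤ b)
    (h : (1 + 2 * q ^ (b - 1)) ^ b ≤ 2) (ℓ : ℕ) :
    ∑ C ∈ rootedSubtrees b ℓ, q ^ #(outerChildren C) ≤ 2 * q ^ b := by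
  have hcard : ∀ C ∈ rootedSubtrees b ℓ, q ^ #(outerChildren C) = q * (q ^ (b - 1)) ^ #C := by
    intro C hC
    obtain ⟨-, hroot, hclosed⟩ := mem_rootedSubtrees.1 hC
    have hsum := card_outerChildren_add_card hroot hclosed
    obtain ⟨k, rfl⟩ : ∃ k, b = k + 1 := ⟨b - 1, by omega⟩
    rw [← pow_mul, ← pow_succ', Nat.add_sub_cancel]
    congr 1
    rw [add_mul, one_mul] at hsum
    omega
  calc ∑ C ∈ rootedSubtrees b ℓ, q ^ #(outerChildren C)
      = q * ∑ C ∈ rootedSubtrees b ℓ, (q ^ (b - 1)) ^ #C := by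
        rw [sum_congr rfl hcard, mul_sum]
    _ ≤ q * (2 * q ^ (b - 1)) := by
        gcongr
        exact sum_rootedSubtrees_pow_card_le (pow_nonneg hq _) h ℓ
    _ = 2 * q ^ b := by rw [mul_left_comm, mul_pow_sub_one (by omega)]

/-- With `e^{2β₀} = 2p`, `mgfSpin p (-2β₀) = 1/2 + 2p(1 - p) = 1 - (2p - 1)²/2`. -/
theorem exists_mgfSpin_lt_one {p : ℝ} (hp : 1 / 2 < p) (hp1 : p ≤ 1) :
    ∃ β₀ > 0, 0 < mgfSpin p (-(2 * β₀)) ∧ mgfSpin p (-(2 * β₀)) < 1 := by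
  refine ⟨Real.log (2 * p) / 2, by have := Real.log_pos (by linarith : 1 < 2 * p); positivity, ?_⟩
  have hval : mgfSpin p (-(2 * (Real.log (2 * p) / 2))) = 1 / 2 + 2 * p * (1 - p) := by
    rw [mgfSpin, mul_div_cancel₀ _ two_ne_zero, neg_neg, Real.exp_neg,
      Real.exp_log (by linarith)]
    field_simp
  rw [hval]
  constructor <;> nlinarith

section Asymptotics

open Filter

theorem eventually_one_add_two_mul_pow_pow_le_two {q : ℝ} (hq0 : 0 < q) (hq1 : q < 1) :
    ∀ᶠ n : ℕ in atTop, (1 + 2 * q ^ (n - 1)) ^ n ≤ 2 := by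
  have hlim := tendsto_self_mul_const_pow_of_lt_one hq0.le hq1
  have hlog : 0 < q * Real.log 2 / 2 := by have := Real.log_pos one_lt_two; positivity
  filter_upwards [(tendsto_order.1 hlim).2 _ hlog, eventually_ge_atTop 1] with n hn hn1
  have hshift : (n : ℝ) * q ^ (n - 1) * q = n * q ^ n := by
    rw [mul_assoc, pow_sub_one_mul (by omega)]
  have hsmall : n * (2 * q ^ (n - 1)) ≤ Real.log 2 := by nlinarith
  calc (1 + 2 * q ^ (n - 1)) ^ n ≤ Real.exp (2 * q ^ (n - 1)) ^ n := by
        gcongr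
        linarith [Real.add_one_le_exp (2 * q ^ (n - 1))]
    _ = Real.exp (n * (2 * q ^ (n - 1))) := (Real.exp_nat_mul _ n).symm
    _ ≤ Real.exp (Real.log 2) := Real.exp_le_exp.2 hsmall
    _ = 2 := Real.exp_log two_pos

theorem exists_pos_eventually_mul_pow_le_exp {q : ℝ} (hq0 : 0 < q) (hq1 : q < 1) (K : ℝ) :
    ∃ c > 0, ∀ᶠ n : ℕ in atTop, K * q ^ n ≤ Real.exp (-(c * n)) := by
  set c := -Real.log q / 2
  have hc : 0 < c := by have := Real.log_neg hq0 hq1; simp only [c]; linarith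
  refine ⟨c, hc, ?_⟩
  have hlim : Tendsto (fun n : ℕ => Real.exp (c * n)) atTop atTop :=
    Real.tendsto_exp_atTop.comp (tendsto_natCast_atTop_atTop.const_mul_atTop hc)
  filter_upwards [hlim.eventually_ge_atTop K] with n hn
  have hq : q ^ n = Real.exp (-(c * n)) * Real.exp (-(c * n)) := by
    rw [← Real.exp_add, ← Real.exp_log hq0, ← Real.exp_nat_mul]
    simp only [c]
    ring_nf
  calc K * q ^ n ≤ Real.exp (c * n) * Real.exp (-(c * n)) * Real.exp (-(c * n)) := by
        rw [hq, ← mul_assoc]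
        gcongr
    _ = Real.exp (-(c * n)) := by rw [← Real.exp_add]; simp

end Asymptotics

/-- for every `p > 1/2` there are `b₀`, `β₀`, `c > 0` such that for all
`b ≥ b₀`, `β ≥ β₀`, `h = 0` and every `ℓ ≥ 1`, `ℙ(R^ℓ(ω) > e^{-2β}) ≤ e^{-cb}`,
the environment being `ω_r = +1` fixed and i.i.d. Bernoulli(p) elsewhere. -/
theorem stmt2 (p : ℝ) (hp : 1 / 2 < p) :
    ∃ b₀ : ℕ, ∃ β₀ : ℝ, ∃ c : ℝ, 0 < c ∧
      ∀ b : ℕ, b₀ ≤ b → ∀ β : ℝ, β₀ ≤ β → ∀ ℓ : ℕ, 1 ≤ ℓ →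
        ∀ P : Measure (V b → Bool), IsBernoulliProductRoot b p P →
          P {ω | ENNReal.ofReal (Real.exp (-(2 * β))) < RfinE b β 0 ℓ ω} ≤
            ENNReal.ofReal (Real.exp (-(c * b))) := by
  rcases le_or_gt p 1 with hp1 | hp1
  swap
  · exact ⟨1, 0, 1, one_pos, fun b hb _ _ _ _ P hP => absurd (hP.le_one hb) hp1.not_ge⟩
  obtain ⟨β₀, hβ₀, hq0, hq1⟩ := exists_mgfSpin_lt_one hp hp1
  set q := mgfSpin p (-(2 * β₀))
  obtain ⟨c, hc, hrate⟩ := exists_pos_eventually_mul_pow_le_exp hq0 hq1 (Real.exp (2 * β₀) * 2)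
  obtain ⟨b₀, hb₀⟩ := Filter.eventually_atTop.1 <|
    (eventually_one_add_two_mul_pow_pow_le_two hq0 hq1).and
      (hrate.and (Filter.eventually_ge_atTop 1))
  refine ⟨b₀, β₀, c, hc, fun b hb β hβ ℓ _ P hP => ?_⟩
  obtain ⟨hcount, hexp, hb1⟩ := hb₀ b hb
  calc P {ω | ENNReal.ofReal (Real.exp (-(2 * β))) < RfinE b β 0 ℓ ω}
      ≤ P {ω | ω [] = true → 1 < peierlsSum b β₀ ℓ ω} := measure_mono fun ω hω hroot =>
        lt_of_not_ge fun hS => (RfinE_le_of_peierlsSum_le_one hβ₀ hβ hroot hS).not_gt hω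
    _ ≤ ENNReal.ofReal
          (Real.exp (2 * β₀) * ∑ C ∈ rootedSubtrees b ℓ, q ^ #(outerChildren C)) := by
        have := hP.measure_lt_le (f := peierlsSum b β₀ ℓ) (by linarith) hp1
          (notMem_erase [] (ball b (ℓ + 1))) (fun _ => peierlsSum_nonneg)
          (fun _ _ => peierlsSum_congr) one_pos
        rwa [div_one, sum_bernoulli_mul_peierlsSum] at this
    _ ≤ ENNReal.ofReal (Real.exp (-(c * b))) := by
        refine ENNReal.ofReal_le_ofReal (le_trans ?_ hexp)
        rw [mul_assoc]
        gcongr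
        exact sum_rootedSubtrees_pow_card_outerChildren_le hq0.le hb1 hcount ℓ

end Paper
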